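/- Suppose p in R<x,x*> has the form p = (s + q) f, where s is a nonzero sum of squares, q* = -q, f is nonzero, and deg(s + q) > 0. Then the left ideal I generated by p is not real; indeed, f* p + p* f = 2 f* s f is a nonzero sum of squares lying in I + I*, while deg(f) < deg(p). -/

import Mathlib

open scoped BigOperators

noncomputable section

/-- The free real *-algebra on `g` variables `x₁,…,x_g` and their formal adjoints
`x₁*,…,x_g*`, modeled as the monoid algebra of the free monoid on `2g` letters,
where `Sum.inl i` is `xᵢ` and `Sum.inr i` is `xᵢ*`. -/
abbrev FreeStarAlg (g : ℕ) := MonoidAlgebra ℝ (FreeMonoid (Fin g ⊕ Fin g))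

namespace FreeStarAlg

variable {g : ℕ}

/-- The involution on words: reverse the word and star each letter. -/
def starWord (w : FreeMonoid (Fin g ⊕ Fin g)) : FreeMonoid (Fin g ⊕ Fin g) :=
  FreeMonoid.ofList (((FreeMonoid.toList w).map Sum.swap).reverse)

/-- The involution `p ↦ p*` on the free *-algebra. -/
def starP (p : FreeStarAlg g) : FreeStarAlg g :=
  MonoidAlgebra.ofCoeff (Finsupp.mapDomain starWord p.coeff)

/-- The monomial corresponding to a word. -/
def mono (w : FreeMonoid (Fin g ⊕ Fin g)) : FreeStarAlg g :=
  MonoidAlgebra.single w 1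

/-- Degree of a noncommutative polynomial. -/
def deg (p : FreeStarAlg g) : ℕ :=
  p.coeff.support.sup fun w => (FreeMonoid.toList w).length

/-- `p` is homogeneous of degree `d`: every word appearing in `p` has length `d`. -/
def IsHom (d : ℕ) (p : FreeStarAlg g) : Prop :=
  ∀ w ∈ p.coeff.support, (FreeMonoid.toList w).length = d

/-- `p` is a (finite) sum of hermitian squares `qᵢ* qᵢ`. -/
def IsSOS (p : FreeStarAlg g) : Prop :=
  ∃ (k : ℕ) (q : Fin k → FreeStarAlg g), p = ∑ i, starP (q i) * q i

/-- Membership in `I + I*`. -/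
def MemIplusIstar (I : Submodule (FreeStarAlg g) (FreeStarAlg g)) (p : FreeStarAlg g) : Prop :=
  ∃ u ∈ I, ∃ v ∈ I, p = u + starP v

/-- A left ideal `I` is real if `∑ aᵢ* aᵢ ∈ I + I*` forces every `aᵢ ∈ I`. -/
def IsRealIdeal (I : Submodule (FreeStarAlg g) (FreeStarAlg g)) : Prop :=
  ∀ (r : ℕ) (a : Fin r → FreeStarAlg g),
    MemIplusIstar I (∑ i, starP (a i) * a i) → ∀ i, a i ∈ I

/-- The left ideal generated by a set `S`. -/
def leftIdealGen (S : Set (FreeStarAlg g)) : Submodule (FreeStarAlg g) (FreeStarAlg g) :=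
  Submodule.span (FreeStarAlg g) S

/-- `p` is irreducible: it cannot be written as a product of two polynomials of
strictly smaller degree. -/
def Irred (p : FreeStarAlg g) : Prop :=
  ¬ ∃ q r : FreeStarAlg g, p = q * r ∧ deg q < deg p ∧ deg r < deg p

/-- `p` is analytic: it contains no starred variables. -/
def IsAnalytic (p : FreeStarAlg g) : Prop :=
  ∀ w ∈ p.coeff.support, ∀ l ∈ FreeMonoid.toList w, l.isLeft

lemma starWord_mul (u v : FreeMonoid (Fin g ⊕ Fin g)) :
    starWord (u * v) = starWord v * starWord u := by
  simp [starWord]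

lemma starWord_involutive : Function.Involutive (starWord (g := g)) := fun w => by
  simp [starWord, List.map_reverse, Sum.swap_swap_eq]

lemma length_toList_starWord (w : FreeMonoid (Fin g ⊕ Fin g)) :
    (starWord w).toList.length = w.toList.length := by
  simp [starWord]

lemma starP_zero : starP (0 : FreeStarAlg g) = 0 := by simp [starP]

lemma starP_add (a b : FreeStarAlg g) : starP (a + b) = starP a + starP b := by
  simp only [starP, MonoidAlgebra.coeff_add, Finsupp.mapDomain_add, MonoidAlgebra.ofCoeff_add]

lemma starP_smul (r : ℝ) (a : FreeStarAlg g) : starP (r • a) = r • starP a := by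
  simp only [starP, MonoidAlgebra.coeff_smul, Finsupp.mapDomain_smul, MonoidAlgebra.ofCoeff_smul]

lemma starP_single (w : FreeMonoid (Fin g ⊕ Fin g)) (r : ℝ) :
    starP (MonoidAlgebra.single w r) = MonoidAlgebra.single (starWord w) r := by
  simp only [starP, MonoidAlgebra.coeff_single, Finsupp.mapDomain_single,
    MonoidAlgebra.ofCoeff_single]

lemma starP_starP (a : FreeStarAlg g) : starP (starP a) = a := by
  rw [starP, starP, MonoidAlgebra.coeff_ofCoeff, ← Finsupp.mapDomain_comp,
    starWord_involutive.comp_self, Finsupp.mapDomain_id, MonoidAlgebra.ofCoeff_coeff]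

lemma starP_eq_zero_iff {a : FreeStarAlg g} : starP a = 0 ↔ a = 0 :=
  ⟨fun h => by rw [← starP_starP a, h, starP_zero], fun h => h ▸ starP_zero⟩

lemma starP_mul (a b : FreeStarAlg g) : starP (a * b) = starP b * starP a := by
  induction a using MonoidAlgebra.induction_linear with
  | zero => simp [starP_zero]
  | add x y hx hy => rw [add_mul, starP_add, hx, hy, starP_add, mul_add]
  | single w r =>
    induction b using MonoidAlgebra.induction_linear with
    | zero => simp [starP_zero]
    | add x y hx hy => rw [mul_add, starP_add, hx, hy, starP_add, add_mul]
    | single w' r' =>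
      rw [MonoidAlgebra.single_mul_single, starP_single, starP_single, starP_single,
        MonoidAlgebra.single_mul_single, starWord_mul, mul_comm r r']

lemma starP_sum {ι : Type*} (t : Finset ι) (a : ι → FreeStarAlg g) :
    starP (∑ i ∈ t, a i) = ∑ i ∈ t, starP (a i) :=
  map_sum (AddMonoidHom.mk' starP starP_add) a t

lemma starP_mul_sum_mul {k : ℕ} (f : FreeStarAlg g) (e : Fin k → FreeStarAlg g) :
    starP f * (∑ i, starP (e i) * e i) * f = ∑ i, starP (e i * f) * (e i * f) := by
  simp only [Finset.mul_sum, Finset.sum_mul, starP_mul, mul_assoc]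

lemma IsSOS.starP_eq {s : FreeStarAlg g} (hs : IsSOS s) : starP s = s := by
  obtain ⟨k, e, rfl⟩ := hs
  simp only [starP_sum, starP_mul, starP_starP]

lemma IsSOS.starP_mul_mul {s : FreeStarAlg g} (hs : IsSOS s) (f : FreeStarAlg g) :
    IsSOS (starP f * s * f) := by
  obtain ⟨k, e, rfl⟩ := hs
  exact ⟨k, fun i => e i * f, starP_mul_sum_mul f e⟩

lemma IsSOS.add {a b : FreeStarAlg g} (ha : IsSOS a) (hb : IsSOS b) : IsSOS (a + b) := by
  obtain ⟨k, e, rfl⟩ := ha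
  obtain ⟨m, e', rfl⟩ := hb
  exact ⟨k + m, Fin.append e e', by simp [Fin.sum_univ_add]⟩

lemma MemIplusIstar.smul {I : Submodule (FreeStarAlg g) (FreeStarAlg g)} {a : FreeStarAlg g}
    (ha : MemIplusIstar I a) (r : ℝ) : MemIplusIstar I (r • a) := by
  obtain ⟨u, hu, v, hv, rfl⟩ := ha
  exact ⟨r • u, I.smul_of_tower_mem r hu, r • v, I.smul_of_tower_mem r hv,
    by rw [smul_add, starP_smul]⟩

lemma exists_eq_mul_of_mul_mem_leftIdealGen {x h f : FreeStarAlg g} (hf : f ≠ 0)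
    (hx : x * f ∈ leftIdealGen {h * f}) : ∃ c, x = c * h := by
  obtain ⟨c, hc⟩ := Submodule.mem_span_singleton.mp hx
  exact ⟨c, mul_right_cancel₀ hf (by rw [← hc, smul_eq_mul, mul_assoc])⟩

lemma length_le_deg {p : FreeStarAlg g} {w : FreeMonoid (Fin g ⊕ Fin g)}
    (hw : w ∈ p.coeff.support) : w.toList.length ≤ deg p :=
  Finset.le_sup (f := fun w => w.toList.length) hw

lemma exists_length_eq_deg {p : FreeStarAlg g} (hp : p ≠ 0) :
    ∃ w ∈ p.coeff.support, w.toList.length = deg p := by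
  obtain ⟨w, hw, h⟩ := Finset.exists_mem_eq_sup p.coeff.support
    (Finsupp.support_nonempty_iff.mpr (by simpa using hp)) fun w => w.toList.length
  exact ⟨w, hw, h.symm⟩

lemma deg_starP (p : FreeStarAlg g) : deg (starP p) = deg p := by
  classical
  rw [deg, starP, MonoidAlgebra.coeff_ofCoeff,
    Finsupp.mapDomain_support_of_injective starWord_involutive.injective, Finset.sup_image]
  exact Finset.sup_congr rfl fun w _ => length_toList_starWord w

lemma deg_add_le (a b : FreeStarAlg g) : deg (a + b) ≤ max (deg a) (deg b) := by
  classical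
  refine Finset.sup_le fun w hw => ?_
  rcases Finset.mem_union.mp (Finsupp.support_add hw) with h | h
  · exact le_max_of_le_left (length_le_deg h)
  · exact le_max_of_le_right (length_le_deg h)

lemma deg_smul {r : ℝ} (hr : r ≠ 0) (a : FreeStarAlg g) : deg (r • a) = deg a := by
  rw [deg, deg, MonoidAlgebra.coeff_smul, Finsupp.support_smul_eq hr]

lemma uniqueMul_of_length_eq_deg {a b : FreeStarAlg g} {u v : FreeMonoid (Fin g ⊕ Fin g)}
    (hu : u.toList.length = deg a) (hv : v.toList.length = deg b) :
    UniqueMul a.coeff.support b.coeff.support u v := by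
  intro y z hy hz hyz
  have hyz' : y.toList ++ z.toList = u.toList ++ v.toList := by
    simpa using congrArg FreeMonoid.toList hyz
  have hlen := congrArg List.length hyz'
  have := length_le_deg hy
  have := length_le_deg hz
  simp only [List.length_append] at hlen
  obtain ⟨h1, h2⟩ := List.append_inj hyz' (by omega)
  exact ⟨FreeMonoid.toList.injective h1, FreeMonoid.toList.injective h2⟩

lemma deg_mul {a b : FreeStarAlg g} (ha : a ≠ 0) (hb : b ≠ 0) :
    deg (a * b) = deg a + deg b := by
  classical
  obtain ⟨u, hu, hul⟩ := exists_length_eq_deg ha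
  obtain ⟨v, hv, hvl⟩ := exists_length_eq_deg hb
  refine le_antisymm (Finset.sup_le fun w hw => ?_) ?_
  · obtain ⟨y, hy, z, hz, rfl⟩ :=
      Finset.mem_mul.mp (MonoidAlgebra.support_coeff_mul_subset a b hw)
    simpa using add_le_add (length_le_deg hy) (length_le_deg hz)
  · have huv : u * v ∈ (a * b).coeff.support := by
      rw [Finsupp.mem_support_iff,
        MonoidAlgebra.coeff_mul_mul_of_uniqueMul (uniqueMul_of_length_eq_deg hul hvl)]
      exact mul_ne_zero (Finsupp.mem_support_iff.mp hu) (Finsupp.mem_support_iff.mp hv)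
    simpa [hul, hvl] using length_le_deg huv

lemma two_mul_deg_le_deg_starP_mul_mul {h c : FreeStarAlg g} (hne : starP h * c * h ≠ 0) :
    2 * deg h ≤ deg (starP h * c * h) := by
  have hhc := left_ne_zero_of_mul hne
  rw [deg_mul hhc (right_ne_zero_of_mul hne), deg_mul (left_ne_zero_of_mul hhc)
    (right_ne_zero_of_mul hhc), deg_starP]
  omega

lemma deg_le_deg_add_of_starP_eq_neg {s q : FreeStarAlg g} (hs : starP s = s)
    (hq : starP q = -q) : deg s ≤ deg (s + q) := by
  have h2s : (2 : ℝ) • s = (s + q) + starP (s + q) := by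
    rw [starP_add, hs, hq, two_smul]
    abel
  calc deg s = deg ((2 : ℝ) • s) := (deg_smul two_ne_zero s).symm
    _ ≤ max (deg (s + q)) (deg (starP (s + q))) := h2s ▸ deg_add_le _ _
    _ = deg (s + q) := by rw [deg_starP, max_self]

lemma starP_mul_add_starP_mul {s q f : FreeStarAlg g} (hs : starP s = s) (hq : starP q = -q) :
    starP f * ((s + q) * f) + starP ((s + q) * f) * f = 2 * (starP f * s * f) := by
  rw [starP_mul, starP_add, hs, hq]
  noncomm_ring

/-- Realness would put every `eᵢ f` in `I`, so `eᵢ = cᵢ h` and `s = ∑ eᵢ* eᵢ = h* (∑ cᵢ* cᵢ) h`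
would have degree at least `2 deg h`. -/
theorem not_isRealIdeal_leftIdealGen_mul {s h f : FreeStarAlg g} (hs : IsSOS s) (hs0 : s ≠ 0)
    (hf : f ≠ 0) (hh : 0 < deg h) (hsh : deg s ≤ deg h)
    (hmem : MemIplusIstar (leftIdealGen {h * f}) (starP f * s * f)) :
    ¬ IsRealIdeal (leftIdealGen {h * f}) := by
  intro hreal
  obtain ⟨k, e, rfl⟩ := hs
  rw [starP_mul_sum_mul] at hmem
  choose c hc using fun i => exists_eq_mul_of_mul_mem_leftIdealGen hf (hreal k _ hmem i)
  have hsC : ∑ i, starP (e i) * e i = starP h * (∑ i, starP (c i) * c i) * h := by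
    simp only [starP_mul_sum_mul, hc]
  have := two_mul_deg_le_deg_starP_mul_mul (hsC ▸ hs0)
  rw [← hsC] at this
  omega

end FreeStarAlg

open FreeStarAlg

/-- If `p = (s + q) f` with `s` a nonzero sum of squares, `q* = -q`,
`f ≠ 0` and `deg (s + q) > 0`, then the left ideal generated by `p` is not real;
indeed `f* p + p* f = 2 f* s f` is a nonzero sum of squares in `I + I*`, and
`deg f < deg p`. -/
theorem stmt11 {g : ℕ} (s q f p : FreeStarAlg g)
    (hs : IsSOS s) (hs0 : s ≠ 0) (hq : starP q = -q) (hf : f ≠ 0)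
    (hdeg : 0 < deg (s + q)) (hp : p = (s + q) * f) :
    ¬ IsRealIdeal (leftIdealGen {p}) ∧
      starP f * p + starP p * f = 2 * (starP f * s * f) ∧
      IsSOS (starP f * p + starP p * f) ∧
      starP f * p + starP p * f ≠ 0 ∧
      MemIplusIstar (leftIdealGen {p}) (starP f * p + starP p * f) ∧
      deg f < deg p := by
  subst hp
  have key := starP_mul_add_starP_mul (f := f) hs.starP_eq hq
  have hfp : starP f * ((s + q) * f) ∈ leftIdealGen {(s + q) * f} :=
    Submodule.mem_span_singleton.mpr ⟨starP f, rfl⟩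
  have hmem : MemIplusIstar (leftIdealGen {(s + q) * f})
      (starP f * ((s + q) * f) + starP ((s + q) * f) * f) :=
    ⟨_, hfp, _, hfp, by rw [starP_mul (starP f), starP_starP]⟩
  have hsq : s + q ≠ 0 := by rintro h; simp [h, deg] at hdeg
  refine ⟨?_, key, ?_, ?_, hmem, ?_⟩
  · refine not_isRealIdeal_leftIdealGen_mul hs hs0 hf hdeg
      (deg_le_deg_add_of_starP_eq_neg hs.starP_eq hq) ?_
    convert hmem.smul (2⁻¹ : ℝ) using 1
    rw [key, two_mul, ← two_smul ℝ, smul_smul, inv_mul_cancel₀ two_ne_zero, one_smul]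
  · rw [key, two_mul]
    exact (hs.starP_mul_mul f).add (hs.starP_mul_mul f)
  · rw [key, two_mul, ← two_smul ℝ]
    exact smul_ne_zero two_ne_zero
      (mul_ne_zero (mul_ne_zero (starP_eq_zero_iff.not.mpr hf) hs0) hf)
  · rw [deg_mul hsq hf]
    omega
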